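/- arXiv:1110.4132 — 8 statements merged into one kernel-verified Lean document; each statement's English description precedes it below -/
import Mathlib

section
/- Let n₁, n₂, l₁, l₂ > 0 with n₁ ≠ n₂, A = (n₁/n₂ + n₂/n₁)/2 + 1, B = (n₁/n₂ + n₂/n₁)/2 − 1, a = n₁l₁ + n₂l₂, b = n₁l₁ − n₂l₂, f(ν) = A cos(aν) − B cos(bν). Assume b ≠ 0 and a/b is irrational. Then A + B = n₁/n₂ + n₂/n₁ > 2, and for every M > 0 there exist ν₁ > M and ν₂ > M such that f(ν₁) ≥ (A + B + 2)/2 > 2 and f(ν₂) ≤ −(A + B + 2)/2 < −2. In particular the function f(ν) = trace M(ν) of the two-layer periodic optical medium exceeds 2 in absolute value for arbitrarily large frequencies, so the medium has infinitely many spectral gaps. -/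
open Real Filter Topology

/-!
Take ν = (φ + 2πn)/|b| with n ∈ ℕ, so that cos(bν) = cos φ while aν = (a/|b|)·2πn + const.
As a/b is irrational, the integer multiples of the angle 2π·a/|b| are dense in the circle, and
in a compact group the natural multiples of an element have the same closure; so along n → ∞
the angle aν comes arbitrarily close to any prescribed value. Since A = B + 2, the threshold
(A + B + 2)/2 equals A: taking cos(bν) = -1 and cos(aν) > 2/A gives f(ν) > 2 + B = A, and
taking cos(bν) = 1 and cos(aν) < -2/A gives f(ν) < -A.
-/

theorem two_lt_div_add_div {x y : ℝ} (hx : 0 < x) (hy : 0 < y) (hxy : x ≠ y) :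
    2 < x / y + y / x := by
  have hsq : x / y + y / x - 2 = (x - y) ^ 2 / (x * y) := by field_simp; ring
  have hpos : 0 < (x - y) ^ 2 / (x * y) := by positivity
  linarith

theorem Real.Angle.mapClusterPt_nsmul_coe_mul_two_pi {ξ : ℝ} (hξ : Irrational ξ) (θ : Angle) :
    MapClusterPt θ atTop (fun n : ℕ ↦ n • ((ξ * (2 * π) : ℝ) : Angle)) := by
  have : Fact (0 < 2 * π) := ⟨two_pi_pos⟩
  have : CompactSpace Angle := inferInstanceAs (CompactSpace (AddCircle (2 * π)))
  have hdense : DenseRange (· • ((ξ * (2 * π) : ℝ) : Angle) : ℤ → Angle) :=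
    AddCircle.denseRange_zsmul_coe_iff.2 (by rwa [mul_div_cancel_right₀ _ two_pi_pos.ne'])
  rw [mapClusterPt_atTop_nsmul_iff_mem_topologicalClosure_zmultiples,
    ← SetLike.mem_coe, AddSubgroup.topologicalClosure_coe, AddSubgroup.coe_zmultiples,
    hdense.closure_range]
  trivial

theorem frequently_lt_cos_nat_mul_add {ξ : ℝ} (hξ : Irrational ξ) (β : ℝ) {c : ℝ} (hc : c < 1) :
    ∃ᶠ n : ℕ in atTop, c < cos (ξ * (n * (2 * π)) + β) := by
  have hnhds : {θ : Angle | c < (θ + β).cos} ∈ 𝓝 (-β : Angle) :=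
    (isOpen_lt continuous_const (Angle.continuous_cos.comp (continuous_add_const _))).mem_nhds
      (by simpa using hc)
  refine ((Angle.mapClusterPt_nsmul_coe_mul_two_pi hξ _).frequently hnhds).mono fun n hn ↦ ?_
  rwa [← Angle.coe_nsmul, ← Angle.coe_add, Angle.cos_coe, nsmul_eq_mul, mul_left_comm] at hn

theorem cos_mul_div_abs {b : ℝ} (hb : b ≠ 0) (x : ℝ) : cos (b * (x / |b|)) = cos x := by
  rcases abs_choice b with h | h <;> rw [h]
  · rw [mul_div_cancel₀ _ hb]
  · rw [mul_div_assoc', div_neg, mul_div_cancel_left₀ _ hb, cos_neg]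

theorem exists_gt_cos_mul_eq_and_lt_cos_mul_add {a b : ℝ} (hb : b ≠ 0) (h : Irrational (a / b))
    (φ β M : ℝ) {c : ℝ} (hc : c < 1) :
    ∃ ν > M, cos (b * ν) = cos φ ∧ c < cos (a * ν + β) := by
  have hirr : Irrational (a / |b|) := by
    rcases abs_choice b with hb' | hb' <;> rw [hb']
    exacts [h, by rw [div_neg]; exact h.neg]
  have hlarge : ∀ᶠ n : ℕ in atTop, M < (φ + n * (2 * π)) / |b| :=
    (tendsto_atTop_add_const_left _ φ (tendsto_natCast_atTop_atTop.atTop_mul_const two_pi_pos)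
      |>.atTop_div_const (abs_pos.2 hb)).eventually_gt_atTop M
  obtain ⟨n, hcos, hM⟩ :=
    ((frequently_lt_cos_nat_mul_add hirr (a / |b| * φ + β) hc).and_eventually hlarge).exists
  refine ⟨(φ + n * (2 * π)) / |b|, hM, ?_, ?_⟩
  · rw [cos_mul_div_abs hb, cos_add_nat_mul_two_pi]
  · convert hcos using 2; ring

theorem stmt_1_general (n₁ n₂ : ℝ) (hn₁ : 0 < n₁) (hn₂ : 0 < n₂) (hne : n₁ ≠ n₂)
    (A B a b : ℝ)
    (hA : A = (n₁ / n₂ + n₂ / n₁) / 2 + 1)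
    (hB : B = (n₁ / n₂ + n₂ / n₁) / 2 - 1)
    (hb0 : b ≠ 0) (hirr : Irrational (a / b))
    (f : ℝ → ℝ) (hf : ∀ ν, f ν = A * Real.cos (a * ν) - B * Real.cos (b * ν)) :
    (A + B = n₁ / n₂ + n₂ / n₁ ∧ n₁ / n₂ + n₂ / n₁ > 2) ∧
    ∀ M > 0, (∃ ν₁ > M, f ν₁ ≥ (A + B + 2) / 2 ∧ (A + B + 2) / 2 > 2) ∧
             (∃ ν₂ > M, f ν₂ ≤ -((A + B + 2) / 2) ∧ -((A + B + 2) / 2) < -2) := by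
  have hsum : A + B = n₁ / n₂ + n₂ / n₁ := by rw [hA, hB]; ring
  have hgt : 2 < n₁ / n₂ + n₂ / n₁ := two_lt_div_add_div hn₁ hn₂ hne
  have hmid : (A + B + 2) / 2 = A := by rw [hA, hB]; ring
  have hAB : A = B + 2 := by rw [hA, hB]; ring
  have hA2 : 2 < A := by rw [hA]; linarith
  have hA0 : 0 < A := by linarith
  have hc : 2 / A < 1 := (div_lt_one hA0).2 hA2
  have hAc : A * (2 / A) = 2 := mul_div_cancel₀ _ hA0.ne'
  refine ⟨⟨hsum, hgt⟩, fun M _ ↦ ⟨?_, ?_⟩⟩ <;> rw [hmid]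
  · obtain ⟨ν, hνM, hcosb, hcosa⟩ := exists_gt_cos_mul_eq_and_lt_cos_mul_add hb0 hirr π 0 M hc
    rw [add_zero] at hcosa
    refine ⟨ν, hνM, ?_, hA2⟩
    have := mul_lt_mul_of_pos_left hcosa hA0
    rw [hf, hcosb, cos_pi]
    linarith
  · obtain ⟨ν, hνM, hcosb, hcosa⟩ := exists_gt_cos_mul_eq_and_lt_cos_mul_add hb0 hirr 0 π M hc
    rw [cos_add_pi] at hcosa
    refine ⟨ν, hνM, ?_, by linarith⟩
    have := mul_lt_mul_of_pos_left hcosa hA0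
    rw [hf, hcosb, cos_zero]
    linarith

theorem stmt_1 (n₁ n₂ l₁ l₂ : ℝ) (hn₁ : 0 < n₁) (hn₂ : 0 < n₂)
    (hl₁ : 0 < l₁) (hl₂ : 0 < l₂) (hne : n₁ ≠ n₂)
    (A B a b : ℝ)
    (hA : A = (n₁ / n₂ + n₂ / n₁) / 2 + 1)
    (hB : B = (n₁ / n₂ + n₂ / n₁) / 2 - 1)
    (ha : a = n₁ * l₁ + n₂ * l₂)
    (hb : b = n₁ * l₁ - n₂ * l₂)
    (hb0 : b ≠ 0) (hirr : Irrational (a / b))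
    (f : ℝ → ℝ) (hf : ∀ ν, f ν = A * Real.cos (a * ν) - B * Real.cos (b * ν)) :
    (A + B = n₁ / n₂ + n₂ / n₁ ∧ n₁ / n₂ + n₂ / n₁ > 2) ∧
    ∀ M > 0, (∃ ν₁ > M, f ν₁ ≥ (A + B + 2) / 2 ∧ (A + B + 2) / 2 > 2) ∧
             (∃ ν₂ > M, f ν₂ ≤ -((A + B + 2) / 2) ∧ -((A + B + 2) / 2) < -2) :=
  stmt_1_general n₁ n₂ hn₁ hn₂ hne A B a b hA hB hb0 hirr f hf
end

section
/- Let a, b, c, d be real numbers with ad − bc = 1, and let t, r be complex numbers satisfying the scattering matching conditions a(1 + r) + i·b(1 − r) = t and c(1 + r) + i·d(1 − r) = i·t. Then |t|² · (a² + b² + c² + d² + 2) = 4; that is, the transmission coefficient satisfies |t|² = 4/(‖A‖²_HS + 2), where ‖A‖²_HS = a² + b² + c² + d² is the squared Hilbert–Schmidt norm of the transfer matrix A = [[a,b],[c,d]]. -/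
/-!
Eliminating `r` from the two matching conditions (using `ad - bc = 1`) leaves the single relation
`t · ((a + d) + (c - b) i) = 2`. Taking squared moduli, and noting
`(a + d)² + (c - b)² = a² + b² + c² + d² + 2 (ad - bc)`, gives the claim.
-/

open Complex

lemma transmission_mul_eq_two {a b c d t r : ℂ} (hdet : a * d - b * c = 1)
    (h1 : a * (1 + r) + I * b * (1 - r) = t) (h2 : c * (1 + r) + I * d * (1 - r) = I * t) :
    t * ((a + d) + (c - b) * I) = 2 := by
  linear_combination (-d - I * c) * h1 + (b + I * a) * h2 +
    (a * t - (a * d - b * c) * (1 - r)) * I_sq + 2 * hdet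

lemma sq_norm_add_sub_mul_I (a b c d : ℝ) :
    ‖((a : ℂ) + d) + ((c : ℂ) - b) * I‖ ^ 2 = a ^ 2 + b ^ 2 + c ^ 2 + d ^ 2 + 2 * (a * d - b * c) := by
  have hw : ((a : ℂ) + d) + ((c : ℂ) - b) * I = ((a + d : ℝ) : ℂ) + ((c - b : ℝ) : ℂ) * I := by
    push_cast; ring
  rw [hw, Complex.sq_norm, normSq_add_mul_I]
  ring

theorem stmt_3 (a b c d : ℝ) (hdet : a * d - b * c = 1) (t r : ℂ)
    (h1 : (a : ℂ) * (1 + r) + Complex.I * b * (1 - r) = t)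
    (h2 : (c : ℂ) * (1 + r) + Complex.I * d * (1 - r) = Complex.I * t) :
    ‖t‖ ^ 2 * (a ^ 2 + b ^ 2 + c ^ 2 + d ^ 2 + 2) = 4 := by
  have key := congrArg (‖·‖ ^ 2) (transmission_mul_eq_two (by exact_mod_cast hdet) h1 h2)
  simp only [norm_mul, mul_pow, sq_norm_add_sub_mul_I] at key
  norm_num at key
  linear_combination key - 2 * ‖t‖ ^ 2 * hdet
end

section
/- Let M = [[a,b],[c,d]] be a real 2×2 matrix with ad − bc = 1 and a + d = 2 cos ω for some ω ∈ ℝ. Define sinc ω = sin ω / ω for ω ≠ 0 and sinc 0 = 1, and set D = [[−b, 0],[a − cos ω, −sinc ω]] and Ĉ = [[cos ω, sinc ω],[−ω sin ω, cos ω]]. Then M·D = D·Ĉ. -/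
noncomputable def sinc (ω : ℝ) : ℝ := if ω = 0 then 1 else Real.sin ω / ω

lemma mul_sinc (ω : ℝ) : ω * sinc ω = Real.sin ω := by
  by_cases h : ω = 0
  · simp [sinc, h]
  · rw [sinc, if_neg h]; field_simp

theorem stmt_4 (a b c d ω : ℝ) (hdet : a * d - b * c = 1)
    (htr : a + d = 2 * Real.cos ω)
    (M D C : Matrix (Fin 2) (Fin 2) ℝ)
    (hM : M = !![a, b; c, d])
    (hD : D = !![-b, 0; a - Real.cos ω, -sinc ω])
    (hC : C = !![Real.cos ω, sinc ω; -ω * Real.sin ω, Real.cos ω]) :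
    M * D = D * C := by
  subst hM hD hC
  have hs := Real.sin_sq_add_cos_sq ω
  have hm := mul_sinc ω
  ext i j
  fin_cases i <;> fin_cases j <;>
    simp [Matrix.mul_apply, Fin.sum_univ_two]
  · ring
  · linear_combination hdet - Real.cos ω * htr - Real.sin ω * hm - hs
  · linear_combination (-sinc ω) * htr
end

section
/- (Proposition 1, concrete form.) Let M = [[a,b],[c,d]] be a real 2×2 matrix with ad − bc = 1, a + d = 2 cos ω for some ω ∈ (−π, π), and b ≠ 0. Define sinc ω = sin ω / ω for ω ≠ 0 and sinc 0 = 1, and set D = [[−b, 0],[a − cos ω, −sinc ω]]. Then det D = b · sinc ω ≠ 0, so D is invertible, and D⁻¹·M·D = [[cos ω, sinc ω],[−ω sin ω, cos ω]]. In particular, near a non-degenerate band edge (ω = 0, where M is not diagonalizable but b ≠ 0), the transfer matrix M is conjugate, by a matrix depending continuously (indeed analytically) on ω, to the canonical transfer matrix of ψ'' + ω²ψ = 0. -/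
lemma sinc_ne_zero {ω : ℝ} (hω : ω ∈ Set.Ioo (-Real.pi) Real.pi) : sinc ω ≠ 0 := by
  unfold sinc
  rcases eq_or_ne ω 0 with h | h
  · simp [h]
  · simp only [h, if_neg]
    have hs : Real.sin ω ≠ 0 := by
      rcases lt_or_gt_of_ne h with hlt | hgt
      · have : Real.sin (-ω) > 0 :=
          Real.sin_pos_of_pos_of_lt_pi (by linarith) (by have := hω.1; linarith)
        rw [Real.sin_neg] at this; linarith
      · have : Real.sin ω > 0 := Real.sin_pos_of_pos_of_lt_pi hgt hω.2
        linarith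
    exact div_ne_zero hs h

theorem stmt_5 (a b c d ω : ℝ) (hdet : a * d - b * c = 1)
    (htr : a + d = 2 * Real.cos ω)
    (hω : ω ∈ Set.Ioo (-Real.pi) Real.pi) (hb : b ≠ 0)
    (M D : Matrix (Fin 2) (Fin 2) ℝ)
    (hM : M = !![a, b; c, d])
    (hD : D = !![-b, 0; a - Real.cos ω, -sinc ω]) :
    D.det = b * sinc ω ∧ D.det ≠ 0 ∧ IsUnit D ∧
    D⁻¹ * M * D = !![Real.cos ω, sinc ω; -ω * Real.sin ω, Real.cos ω] := by
  have hs := sinc_ne_zero hω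
  have hDdet : D.det = b * sinc ω := by
    rw [hD, Matrix.det_fin_two_of]; ring
  have hne : D.det ≠ 0 := by rw [hDdet]; exact mul_ne_zero hb hs
  have hU : IsUnit D := Matrix.isUnit_iff_isUnit_det D |>.2 (isUnit_iff_ne_zero.2 hne)
  refine ⟨hDdet, hne, hU, ?_⟩
  have hsin2 : Real.sin ω * Real.sin ω = 1 - Real.cos ω * Real.cos ω := by
    have := Real.sin_sq_add_cos_sq ω; nlinarith
  have hMD : M * D = D * !![Real.cos ω, sinc ω; -ω * Real.sin ω, Real.cos ω] := by
    rw [hM, hD]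
    ext i j
    fin_cases i <;> fin_cases j <;>
        simp [Matrix.mul_apply, Fin.sum_univ_two]
    · ring
    · linear_combination hdet - Real.cos ω * htr - Real.sin ω * mul_sinc ω -
        Real.sin_sq_add_cos_sq ω
    · linear_combination (-sinc ω) * htr
  rw [mul_assoc, hMD, ← mul_assoc, Matrix.nonsing_inv_mul D (isUnit_iff_ne_zero.2 hne), one_mul]
end

section
/- Let ψ₁, ψ₂ : [0, ℓ] → ℝ be continuous functions (ℓ > 0) that never vanish simultaneously and are linearly independent (no nontrivial real linear combination α ψ₁ + β ψ₂ vanishes identically on [0, ℓ]). Then the 3×3 Gram matrix G with entries G_{ij} = ∫₀^ℓ f_i(s) f_j(s) ds, where f₁ = ψ₁², f₂ = ψ₁ψ₂, f₃ = ψ₂², is positive definite; in particular det G > 0. Consequently, the covariance matrix B of the Gaussian matrix entries in Lemma 1, whose entries are the integrals ∫₀^ℓ ψ_i ψ_j ψ_k ψ_m ds of fourth-order products of the fundamental solutions, is non-degenerate. -/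
/-!
Expanding `xᵀ G x` under the integral gives `∫₀^ℓ (x₁ψ₁² + x₂ψ₁ψ₂ + x₃ψ₂²)²`, so `G` is positive
definite once no nonzero binary quadratic form `Q` vanishes along `(ψ₁, ψ₂)` on `[0, ℓ]`.
Completing the square, `4a Q(u, v) = (2au + bv)² - (b² - 4ac) v²`. If the discriminant is
nonpositive, `Q(ψ₁, ψ₂) ≡ 0` forces `2aψ₁ + bψ₂ ≡ 0`, against linear independence. Otherwise `Q` is a
product `L₁ L₂` of independent linear forms; `L₁(ψ), L₂(ψ)` have no common zero because `ψ` never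
vanishes, so their zero sets split the connected interval `[0, ℓ]` into two disjoint closed pieces,
and one of them is the whole interval, again against linear independence.
-/

open Set Matrix

section Connectedness

variable {α M₀ : Type*} [TopologicalSpace α] [MulZeroClass M₀] [NoZeroDivisors M₀]
  [TopologicalSpace M₀] [T1Space M₀]

theorem IsPreconnected.eqOn_zero_or_eqOn_zero_of_mul_eq_zero {S : Set α} {f g : α → M₀}
    (hS : IsPreconnected S) (hSc : IsClosed S) (hf : ContinuousOn f S) (hg : ContinuousOn g S)
    (hmul : ∀ x ∈ S, f x * g x = 0) (hne : ∀ x ∈ S, ¬(f x = 0 ∧ g x = 0)) :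
    EqOn f 0 S ∨ EqOn g 0 S := by
  have hcover : S ⊆ (S ∩ f ⁻¹' {0}) ∪ (S ∩ g ⁻¹' {0}) := fun x hx =>
    (mul_eq_zero.mp (hmul x hx)).imp (fun h => ⟨hx, h⟩) (fun h => ⟨hx, h⟩)
  have hdisj : S ∩ ((S ∩ f ⁻¹' {0}) ∩ (S ∩ g ⁻¹' {0})) = ∅ :=
    eq_empty_of_forall_notMem fun x ⟨hx, ⟨_, hfx⟩, ⟨_, hgx⟩⟩ => hne x hx ⟨hfx, hgx⟩
  rcases isPreconnected_iff_subset_of_disjoint_closed.mp hS _ _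
    (hf.preimage_isClosed_of_isClosed hSc isClosed_singleton)
    (hg.preimage_isClosed_of_isClosed hSc isClosed_singleton) hcover hdisj with h | h
  · exact Or.inl fun x hx => (h hx).2
  · exact Or.inr fun x hx => (h hx).2

end Connectedness

section QuadraticForms

variable {α : Type*} [TopologicalSpace α] {S : Set α} {ψ₁ ψ₂ : α → ℝ}

theorem det_eq_zero_of_mul_linear_forms_eq_zero (hS : IsPreconnected S) (hSc : IsClosed S)
    (hc₁ : ContinuousOn ψ₁ S) (hc₂ : ContinuousOn ψ₂ S)
    (hnz : ∀ s ∈ S, (ψ₁ s, ψ₂ s) ≠ (0, 0))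
    (hindep : ∀ α β : ℝ, (∀ s ∈ S, α * ψ₁ s + β * ψ₂ s = 0) → α = 0 ∧ β = 0)
    (p q r t : ℝ) (hmul : ∀ s ∈ S, (p * ψ₁ s + q * ψ₂ s) * (r * ψ₁ s + t * ψ₂ s) = 0) :
    p * t - q * r = 0 := by
  by_contra hdet
  have hne : ∀ s ∈ S, ¬(p * ψ₁ s + q * ψ₂ s = 0 ∧ r * ψ₁ s + t * ψ₂ s = 0) := by
    rintro s hs ⟨h₁, h₂⟩
    have e₁ : (p * t - q * r) * ψ₁ s = 0 := by linear_combination t * h₁ - q * h₂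
    have e₂ : (p * t - q * r) * ψ₂ s = 0 := by linear_combination p * h₂ - r * h₁
    exact hnz s hs (Prod.ext ((mul_eq_zero.mp e₁).resolve_left hdet)
      ((mul_eq_zero.mp e₂).resolve_left hdet))
  rcases hS.eqOn_zero_or_eqOn_zero_of_mul_eq_zero hSc
    ((continuousOn_const.mul hc₁).add (continuousOn_const.mul hc₂))
    ((continuousOn_const.mul hc₁).add (continuousOn_const.mul hc₂)) hmul hne with h | h
  · obtain ⟨rfl, rfl⟩ := hindep p q h
    exact hdet (by ring)
  · obtain ⟨rfl, rfl⟩ := hindep r t h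
    exact hdet (by ring)

theorem eq_zero_of_quadratic_form_eq_zero (hS : IsPreconnected S) (hSc : IsClosed S)
    (hc₁ : ContinuousOn ψ₁ S) (hc₂ : ContinuousOn ψ₂ S)
    (hnz : ∀ s ∈ S, (ψ₁ s, ψ₂ s) ≠ (0, 0))
    (hindep : ∀ α β : ℝ, (∀ s ∈ S, α * ψ₁ s + β * ψ₂ s = 0) → α = 0 ∧ β = 0)
    {a b c : ℝ} (hQ : ∀ s ∈ S, a * ψ₁ s ^ 2 + b * (ψ₁ s * ψ₂ s) + c * ψ₂ s ^ 2 = 0) :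
    a = 0 ∧ b = 0 ∧ c = 0 := by
  have hdet := det_eq_zero_of_mul_linear_forms_eq_zero hS hSc hc₁ hc₂ hnz hindep
  have ha : a = 0 := by
    by_contra ha
    set D := b ^ 2 - 4 * a * c
    have hsquare : ∀ s ∈ S, (2 * a * ψ₁ s + b * ψ₂ s) ^ 2 = D * ψ₂ s ^ 2 := fun s hs => by
      linear_combination 4 * a * hQ s hs
    rcases le_or_gt D 0 with hD | hD
    · have hlin : ∀ s ∈ S, 2 * a * ψ₁ s + b * ψ₂ s = 0 := fun s hs => by
        have hle : (2 * a * ψ₁ s + b * ψ₂ s) ^ 2 ≤ 0 :=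
          (hsquare s hs).trans_le (mul_nonpos_of_nonpos_of_nonneg hD (sq_nonneg _))
        exact pow_eq_zero_iff two_ne_zero |>.mp (le_antisymm hle (sq_nonneg _))
      exact ha (by linarith [(hindep _ _ hlin).1])
    · -- `Q` factors over `ℝ` since its discriminant is positive.
      have he := Real.sq_sqrt hD.le
      have hdet' := hdet (2 * a) (b - √D) (2 * a) (b + √D) fun s hs => by
        linear_combination hsquare s hs - ψ₂ s ^ 2 * he
      have : 4 * a * √D = 0 := by linarith
      simp [ha, (Real.sqrt_pos.mpr hD).ne'] at this
  subst ha
  have hb : b = 0 := by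
    have := hdet 0 1 b c fun s hs => by linear_combination hQ s hs
    linarith
  subst hb
  refine ⟨rfl, rfl, (hindep 0 c fun s hs => ?_).2⟩
  exact pow_eq_zero_iff two_ne_zero |>.mp (by linear_combination c * hQ s hs)

end QuadraticForms

section GramMatrix

noncomputable def intervalGram {ι : Type*} (a b : ℝ) (f : ι → ℝ → ℝ) : Matrix ι ι ℝ :=
  Matrix.of fun i j => ∫ s in a..b, f i s * f j s

variable {ι : Type*} {a b : ℝ} {f : ι → ℝ → ℝ}

theorem intervalGram_isHermitian : (intervalGram a b f).IsHermitian := by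
  ext i j
  simp only [intervalGram, conjTranspose_apply, of_apply, star_trivial, mul_comm]

theorem dotProduct_intervalGram_mulVec [Fintype ι]
    (hf : ∀ i j, IntervalIntegrable (fun s => f i s * f j s) MeasureTheory.volume a b)
    (x : ι → ℝ) :
    x ⬝ᵥ intervalGram a b f *ᵥ x = ∫ s in a..b, (∑ i, x i * f i s) ^ 2 := by
  have hterm : ∀ i j, IntervalIntegrable (fun s => x i * x j * (f i s * f j s))
      MeasureTheory.volume a b := fun i j => (hf i j).const_mul _
  calc x ⬝ᵥ intervalGram a b f *ᵥ x
      = ∑ i, ∑ j, ∫ s in a..b, x i * x j * (f i s * f j s) := by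
        simp only [dotProduct, mulVec, intervalGram, of_apply, Finset.mul_sum,
          intervalIntegral.integral_const_mul]
        exact Finset.sum_congr rfl fun i _ => Finset.sum_congr rfl fun j _ => by ring
    _ = ∫ s in a..b, ∑ i, ∑ j, x i * x j * (f i s * f j s) := by
        rw [intervalIntegral.integral_finsetSum fun i _ => by
          simpa only [Finset.sum_fn] using IntervalIntegrable.sum _ fun j _ => hterm i j]
        simp only [intervalIntegral.integral_finsetSum fun j _ => hterm _ j]
    _ = ∫ s in a..b, (∑ i, x i * f i s) ^ 2 := by
        simp only [sq, Finset.sum_mul_sum]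
        exact intervalIntegral.integral_congr fun s _ => Finset.sum_congr rfl fun i _ =>
          Finset.sum_congr rfl fun j _ => by ring

theorem intervalGram_posDef [Fintype ι] (hab : a < b) (hf : ∀ i, ContinuousOn (f i) (Icc a b))
    (hindep : ∀ x : ι → ℝ, (∀ s ∈ Icc a b, ∑ i, x i * f i s = 0) → x = 0) :
    (intervalGram a b f).PosDef := by
  refine posDef_iff_dotProduct_mulVec.mpr ⟨intervalGram_isHermitian, fun x hx => ?_⟩
  have hcomb : ContinuousOn (fun s => ∑ i, x i * f i s) (Icc a b) :=
    continuousOn_finsetSum _ fun i _ => continuousOn_const.mul (hf i)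
  obtain ⟨s, hs, hne⟩ : ∃ s ∈ Icc a b, ∑ i, x i * f i s ≠ 0 := by
    by_contra! h
    exact hx (hindep x h)
  rw [star_trivial, dotProduct_intervalGram_mulVec fun i j =>
    ((hf i).mul (hf j)).intervalIntegrable_of_Icc hab.le]
  exact intervalIntegral.integral_pos hab (hcomb.pow 2) (fun _ _ => sq_nonneg _)
    ⟨s, hs, sq_pos_of_ne_zero hne⟩

end GramMatrix

theorem stmt_7 (ℓ : ℝ) (hℓ : 0 < ℓ) (ψ₁ ψ₂ : ℝ → ℝ)
    (hc₁ : ContinuousOn ψ₁ (Set.Icc 0 ℓ)) (hc₂ : ContinuousOn ψ₂ (Set.Icc 0 ℓ))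
    (hnz : ∀ s ∈ Set.Icc (0:ℝ) ℓ, (ψ₁ s, ψ₂ s) ≠ (0, 0))
    (hindep : ∀ α β : ℝ, (∀ s ∈ Set.Icc (0:ℝ) ℓ, α * ψ₁ s + β * ψ₂ s = 0) →
      α = 0 ∧ β = 0)
    (f : Fin 3 → ℝ → ℝ)
    (hf : f = ![fun s => (ψ₁ s) ^ 2, fun s => ψ₁ s * ψ₂ s, fun s => (ψ₂ s) ^ 2])
    (G : Matrix (Fin 3) (Fin 3) ℝ)
    (hG : G = Matrix.of fun i j => ∫ s in (0:ℝ)..ℓ, f i s * f j s) :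
    G.PosDef ∧ 0 < G.det := by
  subst hf hG
  have hcont : ∀ i, ContinuousOn (![fun s => (ψ₁ s) ^ 2, fun s => ψ₁ s * ψ₂ s,
      fun s => (ψ₂ s) ^ 2] i) (Icc 0 ℓ) := by
    simp only [Fin.forall_fin_succ]
    exact ⟨hc₁.pow 2, hc₁.mul hc₂, hc₂.pow 2, fun i => i.elim0⟩
  have hpd : (intervalGram 0 ℓ _).PosDef := intervalGram_posDef hℓ hcont fun x hx => by
    obtain ⟨h₀, h₁, h₂⟩ := eq_zero_of_quadratic_form_eq_zero isPreconnected_Icc isClosed_Icc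
      hc₁ hc₂ hnz hindep (a := x 0) (b := x 1) (c := x 2) fun s hs => by
        simpa [Fin.sum_univ_three] using hx s hs
    ext i
    fin_cases i <;> assumption
  exact ⟨hpd, hpd.det_pos⟩
end

section
/- Define the entire functions c(x) = Σ_{n≥0} (−1)ⁿ xⁿ/(2n)! and s(x) = Σ_{n≥0} (−1)ⁿ xⁿ/(2n+1)! (so that c(x) = cos√x and s(x) = sin√x/√x for x > 0). Fix real numbers ω ≠ 0, σ, ξ, and for Δ > 0 set κ(Δ) = ω² − σξ/√Δ. Then, as Δ → 0⁺: (i) c(κ(Δ)Δ²) − 1 = O(Δ^{3/2}); (ii) ωΔ·s(κ(Δ)Δ²) − ωΔ = O(Δ^{3/2}); (iii) −(κ(Δ)Δ/ω)·s(κ(Δ)Δ²) − (−ωΔ + σξ√Δ/ω) = O(Δ^{3/2}). Consequently the Prüfer-form transfer matrix of −ψ'' + (σξ/√Δ)ψ = ω²ψ over an interval of length Δ equals [[1, ωΔ], [−ωΔ + σξ√Δ/ω, 1]] + O(Δ^{3/2}). -/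
/-!
Both series are `1 + O(x)` near `0`: the tail `∑ₙ≥₁ ±xⁿ/(F n)!` is dominated by
`|x| ∑ 2⁻ⁿ` once `|x| ≤ 1`. The argument of the series is
`κ(Δ)Δ² = (ω²√Δ - σξ)Δ^{3/2} = O(Δ^{3/2})`, so `c(κΔ²) - 1` and `s(κΔ²) - 1` are `O(Δ^{3/2})`.
The off-diagonal entries are `ωΔ · s(κΔ²)` and, because `-(κΔ/ω) = -ωΔ + σξ√Δ/ω` exactly,
`(-ωΔ + σξ√Δ/ω) · s(κΔ²)`; both prefactors tend to `0`, so subtracting them leaves a bounded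
factor times `s(κΔ²) - 1`.
-/

open Asymptotics Filter Topology

attribute [local instance] Matrix.normedAddCommGroup

noncomputable def cser (x : ℝ) : ℝ := ∑' n : ℕ, (-1) ^ n * x ^ n / ((2 * n).factorial : ℝ)

noncomputable def sser (x : ℝ) : ℝ := ∑' n : ℕ, (-1) ^ n * x ^ n / ((2 * n + 1).factorial : ℝ)

theorem abs_tsum_neg_one_pow_mul_pow_div_factorial_sub_le {F : ℕ → ℕ} (hF : ∀ n, n ≤ F n)
    {x : ℝ} (hx : |x| ≤ 1) :
    |∑' n, (-1) ^ n * x ^ n / ((F n).factorial : ℝ) - 1 / ((F 0).factorial : ℝ)| ≤ 2 * |x| := by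
  have habs (n : ℕ) : |(-1 : ℝ) ^ n * x ^ n / (F n).factorial| = |x| ^ n / (F n).factorial := by
    simp [abs_div, abs_mul, abs_pow]
  have hsum : Summable fun n => (-1 : ℝ) ^ n * x ^ n / (F n).factorial := by
    refine .of_norm_bounded (Real.summable_pow_div_factorial |x|) fun n => ?_
    rw [Real.norm_eq_abs, habs]
    gcongr
    exact hF n
  have htail (n : ℕ) : ‖(-1 : ℝ) ^ (n + 1) * x ^ (n + 1) / (F (n + 1)).factorial‖
      ≤ |x| * (1 / 2 : ℝ) ^ n := by
    have h2 : 2 ^ n ≤ (F (n + 1)).factorial := by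
      simpa [Nat.add_comm] using
        (Nat.factorial_mul_pow_le_factorial (m := 1) (n := n)).trans (Nat.factorial_le (hF _))
    rw [Real.norm_eq_abs, habs, pow_succ, mul_comm (|x| ^ n), mul_div_assoc, one_div_pow]
    gcongr
    · exact pow_le_one₀ (abs_nonneg x) hx
    · exact_mod_cast h2
  rw [hsum.tsum_eq_zero_add, pow_zero, pow_zero, one_mul, add_sub_cancel_left, mul_comm]
  exact tsum_of_norm_bounded (hasSum_geometric_two.mul_left |x|) htail

theorem isBigO_tsum_neg_one_pow_mul_pow_div_factorial_sub {F : ℕ → ℕ} (hF : ∀ n, n ≤ F n) :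
    (fun x : ℝ => ∑' n, (-1) ^ n * x ^ n / ((F n).factorial : ℝ) - 1 / ((F 0).factorial : ℝ))
      =O[𝓝 0] id := by
  refine .of_bound 2 ?_
  filter_upwards [Metric.closedBall_mem_nhds (0 : ℝ) zero_lt_one] with x hx
  rw [Metric.mem_closedBall, dist_zero_right] at hx
  exact abs_tsum_neg_one_pow_mul_pow_div_factorial_sub_le hF hx

theorem cser_sub_one_isBigO : (fun x => cser x - 1) =O[𝓝 0] id := by
  simpa [cser] using isBigO_tsum_neg_one_pow_mul_pow_div_factorial_sub (F := (2 * ·))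
    fun n => Nat.le_mul_of_pos_left n two_pos

theorem sser_sub_one_isBigO : (fun x => sser x - 1) =O[𝓝 0] id := by
  simpa [sser] using isBigO_tsum_neg_one_pow_mul_pow_div_factorial_sub (F := (2 * · + 1))
    fun n => Nat.le_succ_of_le (Nat.le_mul_of_pos_left n two_pos)

theorem Matrix.isBigO_iff_forall_entry {α m n E : Type*} [Fintype m] [Fintype n]
    [NormedAddCommGroup E] {l : Filter α} {f : α → Matrix m n E} {g : α → ℝ} :
    f =O[l] g ↔ ∀ i j, (fun x => f x i j) =O[l] g :=
  isBigO_pi.trans (forall_congr' fun _ => isBigO_pi)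

theorem Filter.Tendsto.mul_isBigO {α : Type*} {l : Filter α} {a f g : α → ℝ} {c : ℝ}
    (ha : Tendsto a l (𝓝 c)) (hf : f =O[l] g) : (fun x => a x * f x) =O[l] g := by
  simpa using (ha.isBigO_one ℝ).mul hf

theorem tendsto_rpow_three_halves_nhdsGT_zero :
    Tendsto (fun Δ : ℝ => Δ ^ ((3 : ℝ) / 2)) (𝓝[>] 0) (𝓝 0) := by
  simpa using ((Real.continuousAt_rpow_const 0 ((3 : ℝ) / 2) (.inr (by norm_num))).tendsto
    |>.mono_left nhdsWithin_le_nhds)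

theorem Real.rpow_three_halves {Δ : ℝ} (hΔ : 0 ≤ Δ) : Δ ^ ((3 : ℝ) / 2) = Δ * √Δ := by
  rw [show (3 : ℝ) / 2 = 1 + 1 / 2 by norm_num, Real.rpow_add' hΔ (by norm_num), Real.rpow_one,
    Real.sqrt_eq_rpow]

section TransferMatrix

variable {ω σ ξ : ℝ} {κ : ℝ → ℝ}

theorem kappa_mul_sq_eq (hκ : ∀ Δ, 0 < Δ → κ Δ = ω ^ 2 - σ * ξ / √Δ) {Δ : ℝ} (hΔ : 0 < Δ) :
    κ Δ * Δ ^ 2 = (ω ^ 2 * √Δ - σ * ξ) * Δ ^ ((3 : ℝ) / 2) := by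
  have hs : 0 < √Δ := Real.sqrt_pos.mpr hΔ
  rw [hκ Δ hΔ, Real.rpow_three_halves hΔ.le]
  field_simp
  rw [Real.sq_sqrt hΔ.le]
  ring

theorem neg_kappa_mul_div_eq (hκ : ∀ Δ, 0 < Δ → κ Δ = ω ^ 2 - σ * ξ / √Δ) {Δ : ℝ} (hΔ : 0 < Δ) :
    -(κ Δ * Δ / ω) = -(ω * Δ) + σ * ξ * √Δ / ω := by
  rw [hκ Δ hΔ, sub_mul, div_mul_eq_mul_div, mul_div_assoc, Real.div_sqrt, sub_div, sq,
    mul_div_right_comm, mul_self_div_self]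
  ring

theorem isBigO_kappa_mul_sq (hκ : ∀ Δ, 0 < Δ → κ Δ = ω ^ 2 - σ * ξ / √Δ) :
    (fun Δ => κ Δ * Δ ^ 2) =O[𝓝[>] 0] fun Δ => Δ ^ ((3 : ℝ) / 2) := by
  have hbdd : Tendsto (fun Δ => ω ^ 2 * √Δ - σ * ξ) (𝓝[>] 0) (𝓝 (ω ^ 2 * √0 - σ * ξ)) :=
    (Continuous.tendsto (by fun_prop) 0).mono_left nhdsWithin_le_nhds
  refine (hbdd.mul_isBigO (isBigO_refl _ _)).congr' ?_ .rfl
  filter_upwards [self_mem_nhdsWithin] with Δ hΔ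
  exact (kappa_mul_sq_eq hκ hΔ).symm

end TransferMatrix

theorem stmt_11_general (ω σ ξ : ℝ) (κ : ℝ → ℝ)
    (hκ : ∀ Δ, 0 < Δ → κ Δ = ω ^ 2 - σ * ξ / Real.sqrt Δ) :
    ((fun Δ => cser (κ Δ * Δ ^ 2) - 1) =O[𝓝[>] (0:ℝ)] fun Δ => Δ ^ ((3:ℝ)/2)) ∧
    ((fun Δ => ω * Δ * sser (κ Δ * Δ ^ 2) - ω * Δ) =O[𝓝[>] (0:ℝ)] fun Δ => Δ ^ ((3:ℝ)/2)) ∧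
    ((fun Δ => -(κ Δ * Δ / ω) * sser (κ Δ * Δ ^ 2) - (-(ω * Δ) + σ * ξ * Real.sqrt Δ / ω))
        =O[𝓝[>] (0:ℝ)] fun Δ => Δ ^ ((3:ℝ)/2)) ∧
    ((fun Δ => (!![cser (κ Δ * Δ ^ 2), ω * Δ * sser (κ Δ * Δ ^ 2);
                  -(κ Δ * Δ / ω) * sser (κ Δ * Δ ^ 2), cser (κ Δ * Δ ^ 2)]
                - !![1, ω * Δ; -(ω * Δ) + σ * ξ * Real.sqrt Δ / ω, 1]
                : Matrix (Fin 2) (Fin 2) ℝ))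
        =O[𝓝[>] (0:ℝ)] fun Δ => Δ ^ ((3:ℝ)/2)) := by
  have hg := isBigO_kappa_mul_sq hκ
  have hg0 := hg.trans_tendsto tendsto_rpow_three_halves_nhdsGT_zero
  have hc : (fun Δ => cser (κ Δ * Δ ^ 2) - 1) =O[𝓝[>] 0] fun Δ => Δ ^ ((3 : ℝ) / 2) :=
    (cser_sub_one_isBigO.comp_tendsto hg0).trans hg
  have hs : (fun Δ => sser (κ Δ * Δ ^ 2) - 1) =O[𝓝[>] 0] fun Δ => Δ ^ ((3 : ℝ) / 2) :=
    (sser_sub_one_isBigO.comp_tendsto hg0).trans hg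
  have hωΔ : Tendsto (fun Δ => ω * Δ) (𝓝[>] 0) (𝓝 (ω * 0)) :=
    (Continuous.tendsto (by fun_prop) 0).mono_left nhdsWithin_le_nhds
  have hcoef : Tendsto (fun Δ => -(ω * Δ) + σ * ξ * √Δ / ω) (𝓝[>] 0)
      (𝓝 (-(ω * 0) + σ * ξ * √0 / ω)) :=
    (Continuous.tendsto (by fun_prop) 0).mono_left nhdsWithin_le_nhds
  have h12 : (fun Δ => ω * Δ * sser (κ Δ * Δ ^ 2) - ω * Δ) =O[𝓝[>] 0]
      fun Δ => Δ ^ ((3 : ℝ) / 2) :=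
    (hωΔ.mul_isBigO hs).congr_left fun Δ => by ring
  have h21 : (fun Δ => -(κ Δ * Δ / ω) * sser (κ Δ * Δ ^ 2) - (-(ω * Δ) + σ * ξ * √Δ / ω))
      =O[𝓝[>] 0] fun Δ => Δ ^ ((3 : ℝ) / 2) := by
    refine (hcoef.mul_isBigO hs).congr' ?_ .rfl
    filter_upwards [self_mem_nhdsWithin] with Δ hΔ
    rw [neg_kappa_mul_div_eq hκ hΔ]
    ring
  refine ⟨hc, h12, h21, Matrix.isBigO_iff_forall_entry.mpr ?_⟩
  simp only [Fin.forall_fin_two]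
  exact ⟨⟨hc, h12⟩, h21, hc⟩

theorem stmt_11 (ω σ ξ : ℝ) (hω : ω ≠ 0) (κ : ℝ → ℝ)
    (hκ : ∀ Δ, 0 < Δ → κ Δ = ω ^ 2 - σ * ξ / Real.sqrt Δ) :
    ((fun Δ => cser (κ Δ * Δ ^ 2) - 1) =O[𝓝[>] (0:ℝ)] fun Δ => Δ ^ ((3:ℝ)/2)) ∧
    ((fun Δ => ω * Δ * sser (κ Δ * Δ ^ 2) - ω * Δ) =O[𝓝[>] (0:ℝ)] fun Δ => Δ ^ ((3:ℝ)/2)) ∧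
    ((fun Δ => -(κ Δ * Δ / ω) * sser (κ Δ * Δ ^ 2) - (-(ω * Δ) + σ * ξ * Real.sqrt Δ / ω))
        =O[𝓝[>] (0:ℝ)] fun Δ => Δ ^ ((3:ℝ)/2)) ∧
    ((fun Δ => (!![cser (κ Δ * Δ ^ 2), ω * Δ * sser (κ Δ * Δ ^ 2);
                  -(κ Δ * Δ / ω) * sser (κ Δ * Δ ^ 2), cser (κ Δ * Δ ^ 2)]
                - !![1, ω * Δ; -(ω * Δ) + σ * ξ * Real.sqrt Δ / ω, 1]
                : Matrix (Fin 2) (Fin 2) ℝ))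
        =O[𝓝[>] (0:ℝ)] fun Δ => Δ ^ ((3:ℝ)/2)) :=
  stmt_11_general ω σ ξ κ hκ
end

section
/- Let λ > 0, C ∈ ℝ, Φ(z) = λ(z + z³/3), and p(z) = C e^{−Φ(z)} ∫_{−∞}^z e^{Φ(t)} dt. Then p is twice differentiable and satisfies the stationary Fokker–Planck equation (1/λ)·p''(z) + d/dz((1 + z²) p(z)) = 0 for all z ∈ ℝ; with λ = 2ω³/σ² this is (σ²/(2ω³)) p'' + ((1 + z²) p)' = 0. -/
/-!
With `Φ' = λ (1 + z²)` and `F(z) = ∫_{-∞}^z e^{Φ}`, the product rule gives `p' = -Φ' p + C`,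
because `e^{-Φ} F' = 1`. Hence the probability flux `(1/λ) p' + (1 + z²) p` is the constant
`C / λ`, and its derivative, which is the left-hand side of the Fokker–Planck equation, vanishes.
-/

open MeasureTheory Set Real

theorem hasDerivAt_integral_Iic {E : Type*} [NormedAddCommGroup E] [NormedSpace ℝ E]
    [CompleteSpace E] {g : ℝ → E} (hg : Continuous g) (hint : ∀ c, IntegrableOn g (Iic c))
    (z : ℝ) : HasDerivAt (fun y => ∫ t in Iic y, g t) (g z) z := by
  have hsplit : (fun y => ∫ t in Iic y, g t) =
      fun y => (∫ t in Iic 0, g t) + ∫ t in (0 : ℝ)..y, g t := by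
    funext y
    rw [← intervalIntegral.integral_Iic_sub_Iic (hint 0) (hint y), add_sub_cancel]
  rw [hsplit]
  exact (hg.integral_hasStrictDerivAt 0 z).hasDerivAt.const_add _

theorem integrableOn_Iic_exp_mul_cubic {lam : ℝ} (hlam : 0 < lam) (c : ℝ) :
    IntegrableOn (fun t => exp (lam * (t + t ^ 3 / 3))) (Iic c) := by
  refine ((integrableOn_exp_mul_Iic hlam c).const_mul (exp (lam * c ^ 3 / 3))).mono'
    (by fun_prop : Continuous _).aestronglyMeasurable.restrict ?_
  filter_upwards [ae_restrict_mem measurableSet_Iic] with t (htc : t ≤ c)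
  have hcube : t ^ 3 ≤ c ^ 3 := (Odd.pow_le_pow (by decide)).2 htc
  rw [norm_of_nonneg (exp_pos _).le, ← exp_add]
  exact exp_le_exp.2 (by nlinarith)

theorem hasDerivAt_exp_neg_mul_integral_Iic_exp {Φ Φ' : ℝ → ℝ} (C : ℝ)
    (hΦ : ∀ z, HasDerivAt Φ (Φ' z) z) (hint : ∀ c, IntegrableOn (fun t => exp (Φ t)) (Iic c))
    (z : ℝ) :
    HasDerivAt (fun y => C * exp (-Φ y) * ∫ t in Iic y, exp (Φ t))
      (-Φ' z * (C * exp (-Φ z) * ∫ t in Iic z, exp (Φ t)) + C) z := by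
  have hΦc : Continuous Φ := continuous_iff_continuousAt.2 fun z => (hΦ z).continuousAt
  have hF : HasDerivAt (fun y => ∫ t in Iic y, exp (Φ t)) (exp (Φ z)) z :=
    hasDerivAt_integral_Iic (by fun_prop) hint z
  have hcancel : exp (-Φ z) * exp (Φ z) = 1 := by rw [← exp_add, neg_add_cancel, exp_zero]
  refine (((hΦ z).neg.exp.const_mul C).mul hF).congr_deriv ?_
  linear_combination C * hcancel

theorem stmt_13 (lam : ℝ) (C : ℝ) (hlam : 0 < lam)
    (Φ p : ℝ → ℝ)
    (hΦ : ∀ z, Φ z = lam * (z + z ^ 3 / 3))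
    (hp : ∀ z, p z = C * Real.exp (-Φ z) * ∫ t in Set.Iic z, Real.exp (Φ t)) :
    Differentiable ℝ p ∧ Differentiable ℝ (deriv p) ∧
    (∀ z : ℝ, (1 / lam) * deriv (deriv p) z
        + deriv (fun y => (1 + y ^ 2) * p y) z = 0) ∧
    (∀ ω σ : ℝ, σ ≠ 0 → lam = 2 * ω ^ 3 / σ ^ 2 →
      ∀ z : ℝ, σ ^ 2 / (2 * ω ^ 3) * deriv (deriv p) z
        + deriv (fun y => (1 + y ^ 2) * p y) z = 0) := by
  have hΦ' (z : ℝ) : HasDerivAt Φ (lam * (1 + z ^ 2)) z := by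
    rw [funext hΦ]
    refine (((hasDerivAt_id' z).add ((hasDerivAt_pow 3 z).div_const 3)).const_mul lam).congr_deriv
      ?_
    push_cast
    ring
  have hint (c : ℝ) : IntegrableOn (fun t => exp (Φ t)) (Iic c) := by
    simpa only [hΦ] using integrableOn_Iic_exp_mul_cubic hlam c
  have hp' (z : ℝ) : HasDerivAt p (-(lam * (1 + z ^ 2)) * p z + C) z := by
    rw [funext hp]
    exact hasDerivAt_exp_neg_mul_integral_Iic_exp C hΦ' hint z
  have hp_diff : Differentiable ℝ p := fun z => (hp' z).differentiableAt
  have hderiv : deriv p = fun z => -(lam * (1 + z ^ 2)) * p z + C := funext fun z => (hp' z).deriv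
  have hderiv_diff : Differentiable ℝ (deriv p) := by rw [hderiv]; fun_prop
  have hflux : (fun y => (1 / lam) * deriv p y + (1 + y ^ 2) * p y) = fun _ => C / lam := by
    funext y
    rw [hderiv]
    field_simp
    ring
  have hFP (z : ℝ) : (1 / lam) * deriv (deriv p) z + deriv (fun y => (1 + y ^ 2) * p y) z = 0 := by
    have h := congrArg (deriv · z) hflux
    simp only [deriv_const] at h
    rwa [deriv_fun_add (by fun_prop) (by fun_prop), deriv_const_mul _ (hderiv_diff z)] at h
  refine ⟨hp_diff, hderiv_diff, hFP, fun ω σ _ hl z => ?_⟩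
  rw [← one_div_div, ← hl]
  exact hFP z
end

section
/- Let λ > 0 and Φ(z) = λ(z + z³/3). Then the double integral ∫_{−∞}^{∞} e^{−Φ(z)} (∫_{−∞}^{z} e^{Φ(t)} dt) dz is finite and equals √(2π/λ) · ∫_0^∞ x^{−1/2} e^{−2λ(x + x³/3)} dx. -/
/-!
Substituting `t = z - 2x` turns the inner integral into `2 ∫₀^∞ e^{Φ(z - 2x)} dx`, and
completing the square gives `Φ(z - 2x) - Φ(z) = -2Φ(x) - 2λx (z - x)²`. After exchanging the
two integrals (the integrand is positive, so Tonelli applies), the `z`-integral is a Gaussian of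
variance `1 / (4λx)`, which contributes `√(π / (2λx))`.
-/

open MeasureTheory Real Set

section HalfLine

variable {E : Type*} [NormedAddCommGroup E] [NormedSpace ℝ E]

theorem setIntegral_Iic_eq_setIntegral_Ici_sub (f : ℝ → E) (z : ℝ) :
    ∫ t in Iic z, f t = ∫ s in Ici 0, f (z - s) := by
  have hpre : (fun s : ℝ => z - s) ⁻¹' Iic z = Ici 0 := by ext s; simp
  rw [← hpre]
  exact ((Measure.measurePreserving_sub_left volume z).setIntegral_preimage_emb
    (Homeomorph.subLeft z).measurableEmbedding f (Iic z)).symm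

theorem setIntegral_Iic_eq_two_smul_setIntegral_Ioi (f : ℝ → E) (z : ℝ) :
    ∫ t in Iic z, f t = (2 : ℝ) • ∫ x in Ioi 0, f (z - 2 * x) := by
  rw [setIntegral_Iic_eq_setIntegral_Ici_sub, integral_Ici_eq_integral_Ioi,
    integral_comp_mul_left_Ioi (fun s => f (z - s)) 0 two_pos, mul_zero, smul_smul,
    mul_inv_cancel₀ two_ne_zero, one_smul]

end HalfLine

theorem integral_exp_neg_mul_sub_sq (b c : ℝ) :
    ∫ z, exp (-b * (z - c) ^ 2) = √(π / b) := by
  rw [integral_sub_right_eq_self (fun z => exp (-b * z ^ 2)) c, integral_gaussian]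

theorem sqrt_div_eq_mul_rpow_neg_half (c : ℝ) {x : ℝ} (hx : 0 ≤ x) :
    √(c / x) = √c * x ^ (-(1 : ℝ) / 2) := by
  rw [sqrt_div' c hx, neg_div, rpow_neg hx, ← sqrt_eq_rpow, div_eq_mul_inv]

noncomputable def cubicPhase (lam z : ℝ) : ℝ := lam * (z + z ^ 3 / 3)

theorem neg_cubicPhase_add_cubicPhase_sub_two_mul (lam z x : ℝ) :
    -cubicPhase lam z + cubicPhase lam (z - 2 * x)
      = -2 * lam * (x + x ^ 3 / 3) + -(2 * lam * x) * (z - x) ^ 2 := by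
  unfold cubicPhase; ring

noncomputable def phaseKernel (lam x z : ℝ) : ℝ :=
  2 * exp (-2 * lam * (x + x ^ 3 / 3)) * exp (-(2 * lam * x) * (z - x) ^ 2)

theorem phaseKernel_nonneg (lam x z : ℝ) : 0 ≤ phaseKernel lam x z := by
  unfold phaseKernel; positivity

theorem exp_neg_cubicPhase_mul_setIntegral_Iic (lam z : ℝ) :
    exp (-cubicPhase lam z) * ∫ t in Iic z, exp (cubicPhase lam t)
      = ∫ x in Ioi 0, phaseKernel lam x z := by
  rw [setIntegral_Iic_eq_two_smul_setIntegral_Ioi, smul_eq_mul, mul_left_comm,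
    ← integral_const_mul, ← integral_const_mul]
  refine setIntegral_congr_fun measurableSet_Ioi fun x _ => ?_
  rw [phaseKernel, mul_assoc, ← exp_add, neg_cubicPhase_add_cubicPhase_sub_two_mul, exp_add]

theorem integral_phaseKernel (lam : ℝ) {x : ℝ} (hx : 0 < x) :
    ∫ z, phaseKernel lam x z
      = √(2 * π / lam) * (x ^ (-(1 : ℝ) / 2) * exp (-2 * lam * (x + x ^ 3 / 3))) := by
  have hsqrt : 2 * √(π / (2 * lam * x)) = √(2 * π / lam) * x ^ (-(1 : ℝ) / 2) := by
    rw [← sqrt_div_eq_mul_rpow_neg_half _ hx.le,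
      show 2 * π / lam / x = 2 ^ 2 * (π / (2 * lam * x)) by ring,
      sqrt_mul (by positivity), sqrt_sq zero_le_two]
  simp only [phaseKernel]
  rw [integral_const_mul, integral_exp_neg_mul_sub_sq, mul_right_comm, hsqrt]
  ring

theorem integrable_phaseKernel_slice {lam x : ℝ} (hlam : 0 < lam) (hx : 0 < x) :
    Integrable (phaseKernel lam x) :=
  ((integrable_exp_neg_mul_sq (by positivity : 0 < 2 * lam * x)).comp_sub_right x).const_mul _

theorem integrableOn_rpow_neg_half_mul_exp_cubic {lam : ℝ} (hlam : 0 < lam) :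
    IntegrableOn (fun x : ℝ => x ^ (-(1 : ℝ) / 2) * exp (-2 * lam * (x + x ^ 3 / 3)))
      (Ioi 0) := by
  have hmajorant : IntegrableOn (fun x : ℝ => x ^ (-(1 : ℝ) / 2) * exp (-(2 * lam) * x))
      (Ioi 0) := by
    simpa only [rpow_one] using
      integrableOn_rpow_mul_exp_neg_mul_rpow (by norm_num : (-1 : ℝ) < -1 / 2) one_pos
        (by positivity : 0 < 2 * lam)
  refine hmajorant.mono' ?_ ?_
  · refine ContinuousOn.aestronglyMeasurable (fun x hx => ?_) measurableSet_Ioi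
    exact ((continuousAt_rpow_const x _ (Or.inl (ne_of_gt hx))).mul
      (by fun_prop)).continuousWithinAt
  · filter_upwards [ae_restrict_mem measurableSet_Ioi] with x (hx : 0 < x)
    rw [norm_of_nonneg (by positivity)]
    gcongr _ * ?_
    exact exp_le_exp.2 (by nlinarith [pow_pos hx 3])

theorem integrable_phaseKernel {lam : ℝ} (hlam : 0 < lam) :
    Integrable (fun p : ℝ × ℝ => phaseKernel lam p.1 p.2)
      ((volume.restrict (Ioi 0)).prod volume) := by
  have hmeas : AEStronglyMeasurable (fun p : ℝ × ℝ => phaseKernel lam p.1 p.2)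
      ((volume.restrict (Ioi 0)).prod volume) := by
    unfold phaseKernel
    exact Continuous.aestronglyMeasurable (by fun_prop)
  refine (integrable_prod_iff hmeas).2 ⟨?_, ?_⟩
  · filter_upwards [ae_restrict_mem measurableSet_Ioi] with x hx
    exact integrable_phaseKernel_slice hlam hx
  · refine IntegrableOn.congr_fun ((integrableOn_rpow_neg_half_mul_exp_cubic hlam).const_mul
      √(2 * π / lam)) (fun x (hx : 0 < x) => ?_) measurableSet_Ioi
    simp only [norm_of_nonneg (phaseKernel_nonneg lam x _), integral_phaseKernel lam hx]

theorem stmt_14 (lam : ℝ) (hlam : 0 < lam) (Φ : ℝ → ℝ)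
    (hΦ : ∀ z, Φ z = lam * (z + z ^ 3 / 3)) :
    MeasureTheory.Integrable
      (fun z => Real.exp (-Φ z) * ∫ t in Set.Iic z, Real.exp (Φ t)) ∧
    (∫ z : ℝ, Real.exp (-Φ z) * ∫ t in Set.Iic z, Real.exp (Φ t))
      = Real.sqrt (2 * Real.pi / lam) *
        ∫ x in Set.Ioi (0:ℝ), x ^ (-(1:ℝ)/2) * Real.exp (-2 * lam * (x + x ^ 3 / 3)) := by
  obtain rfl : Φ = cubicPhase lam := funext hΦ
  have hsplit : (fun z => exp (-cubicPhase lam z) * ∫ t in Iic z, exp (cubicPhase lam t))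
      = fun z => ∫ x in Ioi 0, phaseKernel lam x z :=
    funext (exp_neg_cubicPhase_mul_setIntegral_Iic lam)
  have hint := integrable_phaseKernel hlam
  rw [hsplit]
  refine ⟨hint.integral_prod_right, ?_⟩
  calc ∫ z, ∫ x in Ioi 0, phaseKernel lam x z
      = ∫ x in Ioi 0, ∫ z, phaseKernel lam x z := (integral_integral_swap hint).symm
    _ = ∫ x in Ioi 0, √(2 * π / lam) *
          (x ^ (-(1 : ℝ) / 2) * exp (-2 * lam * (x + x ^ 3 / 3))) :=
        setIntegral_congr_fun measurableSet_Ioi fun x hx => integral_phaseKernel lam hx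
    _ = _ := integral_const_mul _ _
end
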